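/- Let 1 ≤ m < n, let H₁, …, Hₙ be complex Hilbert spaces, let a be a non-zero complex number, and suppose V = [[a, B₁, B₂],[C₁, D₁₁, (1/a)C₁B₂],[C₂, 0, D₂₂]] is an isometric colligation on ℂ ⊕ ((H₁ ⊕ ⋯ ⊕ H_m) ⊕ (H_{m+1} ⊕ ⋯ ⊕ Hₙ)). Let α and β be non-zero scalars satisfying |β|² = |a|² + ‖C₁‖² and α = a/β. Then Ṽ₁ = [[α, B₁],[(1/β)C₁, D₁₁]] is an isometric colligation on ℂ ⊕ (H₁ ⊕ ⋯ ⊕ H_m), Ṽ₂ = [[β, (1/α)B₂],[C₂, D₂₂]] is an isometric colligation on ℂ ⊕ (H_{m+1} ⊕ ⋯ ⊕ Hₙ), and τ_V(z) = τ_{Ṽ₁}(z₁, …, z_m) · τ_{Ṽ₂}(z_{m+1}, …, zₙ) for all z ∈ 𝔻ⁿ. -/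

import Mathlib

open ContinuousLinearMap Metric

noncomputable section

/-- One-variable Schur class: analytic on the open unit disc, bounded by one. -/
def SchurClass (f : ℂ → ℂ) : Prop :=
  AnalyticOnNhd ℂ f (ball 0 1) ∧ ∀ z ∈ ball (0 : ℂ) 1, ‖f z‖ ≤ 1

/-- The open unit bidisc as a subset of `ℂ × ℂ`. -/
def biDisc : Set (ℂ × ℂ) := (ball 0 1) ×ˢ (ball 0 1)

/-- Two-variable Schur class. -/
def SchurClass2 (f : ℂ × ℂ → ℂ) : Prop :=
  AnalyticOnNhd ℂ f biDisc ∧ ∀ z ∈ biDisc, ‖f z‖ ≤ 1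

/-- The open unit polydisc in `ℂⁿ`. -/
def polyDisc (n : ℕ) : Set (Fin n → ℂ) := {z | ∀ i, ‖z i‖ < 1}

variable {H : Type*} [NormedAddCommGroup H] [InnerProductSpace ℂ H]

/-- `V = [[a, B], [C, D]]` on `ℂ ⊕ H` is an isometric colligation, i.e. `V*V = I`,
expressed as preservation of inner products in the Hilbertian direct sum `ℂ ⊕ H`. -/
def IsIsometricColligation (a : ℂ) (B : H →L[ℂ] ℂ) (C : ℂ →L[ℂ] H) (D : H →L[ℂ] H) : Prop :=
  ∀ (z w : ℂ) (h k : H),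
    (starRingEnd ℂ) (a * z + B h) * (a * w + B k) + (inner ℂ (C z + D h) (C w + D k) : ℂ) =
      (starRingEnd ℂ) z * w + (inner ℂ h k : ℂ)

/-- One-variable transfer function `τ_V(z) = a + z B (I - z D)⁻¹ C`. -/
def transfer1 (a : ℂ) (B : H →L[ℂ] ℂ) (C : ℂ →L[ℂ] H) (D : H →L[ℂ] H) (z : ℂ) : ℂ :=
  a + z * B (Ring.inverse (1 - z • D) (C 1))

section Pair

variable {H₁ H₂ K₁ K₂ : Type*}
  [NormedAddCommGroup H₁] [InnerProductSpace ℂ H₁]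
  [NormedAddCommGroup H₂] [InnerProductSpace ℂ H₂]
  [NormedAddCommGroup K₁] [InnerProductSpace ℂ K₁]
  [NormedAddCommGroup K₂] [InnerProductSpace ℂ K₂]

/-- Row operator `[B₁, B₂] : H₁ ⊕ H₂ → ℂ`. -/
def rowB (B₁ : H₁ →L[ℂ] ℂ) (B₂ : H₂ →L[ℂ] ℂ) : WithLp 2 (H₁ × H₂) →L[ℂ] ℂ :=
  (B₁.comp (fst ℂ H₁ H₂) + B₂.comp (snd ℂ H₁ H₂)).comp
    (WithLp.prodContinuousLinearEquiv 2 ℂ H₁ H₂).toContinuousLinearMap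

/-- Column operator `[C₁; C₂] : ℂ → H₁ ⊕ H₂`. -/
def colC (C₁ : ℂ →L[ℂ] H₁) (C₂ : ℂ →L[ℂ] H₂) : ℂ →L[ℂ] WithLp 2 (H₁ × H₂) :=
  ((WithLp.prodContinuousLinearEquiv 2 ℂ H₁ H₂).symm.toContinuousLinearMap).comp (C₁.prod C₂)

/-- Block operator `[[D₁₁, D₁₂], [D₂₁, D₂₂]] : K₁ ⊕ K₂ → H₁ ⊕ H₂`. -/
def blockD (D₁₁ : K₁ →L[ℂ] H₁) (D₁₂ : K₂ →L[ℂ] H₁) (D₂₁ : K₁ →L[ℂ] H₂) (D₂₂ : K₂ →L[ℂ] H₂) :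
    WithLp 2 (K₁ × K₂) →L[ℂ] WithLp 2 (H₁ × H₂) :=
  ((WithLp.prodContinuousLinearEquiv 2 ℂ H₁ H₂).symm.toContinuousLinearMap).comp
    ((((D₁₁.comp (fst ℂ K₁ K₂) + D₁₂.comp (snd ℂ K₁ K₂))).prod
        (D₂₁.comp (fst ℂ K₁ K₂) + D₂₂.comp (snd ℂ K₁ K₂))).comp
      (WithLp.prodContinuousLinearEquiv 2 ℂ K₁ K₂).toContinuousLinearMap)

/-- The diagonal operator `E(z) = z₁ I_{H₁} ⊕ z₂ I_{H₂}` on `H₁ ⊕ H₂`. -/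
def diag2 (z : ℂ × ℂ) : WithLp 2 (H₁ × H₂) →L[ℂ] WithLp 2 (H₁ × H₂) :=
  blockD (z.1 • ContinuousLinearMap.id ℂ H₁) 0 0 (z.2 • ContinuousLinearMap.id ℂ H₂)

/-- Two-variable transfer function `τ_V(z) = a + B (I - E(z) D)⁻¹ E(z) C` on `ℂ ⊕ (H₁ ⊕ H₂)`. -/
def transfer2 (a : ℂ) (B : WithLp 2 (H₁ × H₂) →L[ℂ] ℂ) (C : ℂ →L[ℂ] WithLp 2 (H₁ × H₂))
    (D : WithLp 2 (H₁ × H₂) →L[ℂ] WithLp 2 (H₁ × H₂)) (z : ℂ × ℂ) : ℂ :=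
  a + B (Ring.inverse (1 - (diag2 z).comp D) (diag2 z (C 1)))

end Pair

section Fam

variable {n m k : ℕ} {K : Fin n → Type*} {M : Fin m → Type*} {N : Fin k → Type*}
  [∀ i, NormedAddCommGroup (K i)] [∀ i, InnerProductSpace ℂ (K i)]
  [∀ i, NormedAddCommGroup (M i)] [∀ i, InnerProductSpace ℂ (M i)]
  [∀ i, NormedAddCommGroup (N i)] [∀ i, InnerProductSpace ℂ (N i)]

/-- Row operator `[B₁, …, Bₙ] : ⊕ᵢ Kᵢ → ℂ`. -/
def rowN (B : ∀ i, K i →L[ℂ] ℂ) : PiLp 2 K →L[ℂ] ℂ :=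
  ∑ i, (B i).comp ((ContinuousLinearMap.proj i).comp
    (PiLp.continuousLinearEquiv 2 ℂ K).toContinuousLinearMap)

/-- Column operator `[C₁; …; Cₙ] : ℂ → ⊕ᵢ Kᵢ`. -/
def colN (C : ∀ i, ℂ →L[ℂ] K i) : ℂ →L[ℂ] PiLp 2 K :=
  ((PiLp.continuousLinearEquiv 2 ℂ K).symm.toContinuousLinearMap).comp
    (ContinuousLinearMap.pi C)

/-- Rectangular block-matrix operator `[Dᵢⱼ] : ⊕ⱼ Nⱼ → ⊕ᵢ Mᵢ` (also used for square ones). -/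
def matR (D : ∀ (i : Fin m) (j : Fin k), N j →L[ℂ] M i) : PiLp 2 N →L[ℂ] PiLp 2 M :=
  ((PiLp.continuousLinearEquiv 2 ℂ M).symm.toContinuousLinearMap).comp
    ((ContinuousLinearMap.pi fun i => ∑ j, (D i j).comp (ContinuousLinearMap.proj j)).comp
      (PiLp.continuousLinearEquiv 2 ℂ N).toContinuousLinearMap)

/-- The diagonal operator `E(z) = z₁ I_{K₁} ⊕ ⋯ ⊕ zₙ I_{Kₙ}` on `⊕ᵢ Kᵢ`. -/
def diagN (z : Fin n → ℂ) : PiLp 2 K →L[ℂ] PiLp 2 K :=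
  ((PiLp.continuousLinearEquiv 2 ℂ K).symm.toContinuousLinearMap).comp
    ((ContinuousLinearMap.pi fun i => z i • ContinuousLinearMap.proj i).comp
      (PiLp.continuousLinearEquiv 2 ℂ K).toContinuousLinearMap)

/-- `n`-variable transfer function `τ_V(z) = a + B (I - E(z) D)⁻¹ E(z) C` on `ℂ ⊕ (⊕ᵢ Kᵢ)`. -/
def transferN (a : ℂ) (B : PiLp 2 K →L[ℂ] ℂ) (C : ℂ →L[ℂ] PiLp 2 K)
    (D : PiLp 2 K →L[ℂ] PiLp 2 K) (z : Fin n → ℂ) : ℂ :=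
  a + B (Ring.inverse (1 - (diagN z).comp D) (diagN z (C 1)))

/-- Transfer function of a colligation on `ℂ ⊕ ((⊕ᵢ₌₁ᵐ Mᵢ) ⊕ (⊕ⱼ₌₁ᵏ Nⱼ))` in the `m + k`
variables `(z₁, z₂) ∈ 𝔻^m × 𝔻^k`, where `E(z₁, z₂) = (⊕ᵢ z₁ᵢ I_{Mᵢ}) ⊕ (⊕ⱼ z₂ⱼ I_{Nⱼ})`. -/
def transferSplit (a : ℂ) (B : WithLp 2 (PiLp 2 M × PiLp 2 N) →L[ℂ] ℂ)
    (C : ℂ →L[ℂ] WithLp 2 (PiLp 2 M × PiLp 2 N))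
    (D : WithLp 2 (PiLp 2 M × PiLp 2 N) →L[ℂ] WithLp 2 (PiLp 2 M × PiLp 2 N))
    (z₁ : Fin m → ℂ) (z₂ : Fin k → ℂ) : ℂ :=
  a + B (Ring.inverse (1 - (blockD (diagN z₁) 0 0 (diagN z₂)).comp D)
    (blockD (diagN z₁) 0 0 (diagN z₂) (C 1)))

end Fam

section Helpers
open scoped InnerProductSpace ComplexConjugate

variable {X : Type*} [NormedAddCommGroup X] [InnerProductSpace ℂ X]

lemma norm_le_of_ident {Y : Type*} [NormedAddCommGroup Y] [InnerProductSpace ℂ Y]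
    (b t : ℂ) (w : Y) (u v : X)
    (h : (starRingEnd ℂ) b * b + ((starRingEnd ℂ) t * t * (inner ℂ w w : ℂ) + (inner ℂ u u : ℂ))
      = (inner ℂ v v : ℂ)) : ‖u‖ ≤ ‖v‖ := by
  rw [inner_self_eq_norm_sq_to_K, inner_self_eq_norm_sq_to_K, inner_self_eq_norm_sq_to_K,
    RCLike.conj_mul, RCLike.conj_mul] at h
  have h' : ‖b‖ ^ 2 + (‖t‖ ^ 2 * ‖w‖ ^ 2 + ‖u‖ ^ 2) = ‖v‖ ^ 2 := by
    exact_mod_cast h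
  nlinarith [norm_nonneg b, norm_nonneg t, norm_nonneg u, norm_nonneg v,
    mul_nonneg (sq_nonneg ‖t‖) (sq_nonneg ‖w‖)]

variable [CompleteSpace X]

lemma ring_inverse_apply (T : X →L[ℂ] X) (hT : ‖T‖ < 1) (x y : X) (hxy : x - T x = y) :
    Ring.inverse (1 - T) y = x := by
  have hu : IsUnit (1 - T) := isUnit_one_sub_of_norm_lt_one hT
  obtain ⟨u, hu'⟩ := hu
  have h1 : (1 - T) x = y := by simpa [ContinuousLinearMap.sub_apply] using hxy
  rw [← hu', Ring.inverse_unit, ← h1, ← hu']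
  calc (↑u⁻¹ : X →L[ℂ] X) ((↑u : X →L[ℂ] X) x) = ((↑u⁻¹ * ↑u : X →L[ℂ] X)) x := rfl
    _ = x := by rw [u.inv_mul]; rfl

lemma ring_inverse_spec (T : X →L[ℂ] X) (hT : ‖T‖ < 1) (y : X) :
    Ring.inverse (1 - T) y - T (Ring.inverse (1 - T) y) = y := by
  have hu : IsUnit (1 - T) := isUnit_one_sub_of_norm_lt_one hT
  have h : ((1 - T) * Ring.inverse (1 - T)) y = (1 : X →L[ℂ] X) y := by
    rw [Ring.mul_inverse_cancel _ hu]
  simpa [ContinuousLinearMap.mul_apply, ContinuousLinearMap.sub_apply] using h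

end Helpers

section ProdExt
variable {P Q : Type*} [NormedAddCommGroup P] [NormedAddCommGroup Q]
lemma withlp_prod_ext (x y : WithLp 2 (P × Q)) (h1 : x.fst = y.fst) (h2 : x.snd = y.snd) :
    x = y := congrArg (WithLp.toLp 2) (Prod.ext h1 h2)
end ProdExt

section HelpersN
variable {n : ℕ} {K : Fin n → Type*} [∀ i, NormedAddCommGroup (K i)]
  [∀ i, InnerProductSpace ℂ (K i)]

lemma diagN_norm_le {z : Fin n → ℂ} {r : ℝ} (hr : 0 ≤ r) (hz : ∀ i, ‖z i‖ ≤ r) :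
    ‖(diagN z : PiLp 2 K →L[ℂ] PiLp 2 K)‖ ≤ r := by
  refine ContinuousLinearMap.opNorm_le_bound _ hr fun x => ?_
  have h1 : ‖diagN z x‖ ^ 2 ≤ (r * ‖x‖) ^ 2 := by
    rw [PiLp.norm_sq_eq_of_L2]
    calc ∑ i, ‖diagN z x i‖ ^ 2 = ∑ i, ‖z i • x i‖ ^ 2 := rfl
      _ ≤ ∑ i, r ^2 * ‖x i‖ ^ 2 := by
          refine Finset.sum_le_sum fun i _ => ?_
          rw [norm_smul]
          calc (‖z i‖ * ‖x i‖)^2 = ‖z i‖^2 * ‖x i‖^2 := by ring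
            _ ≤ r^2 * ‖x i‖^2 := by
                have h1 : ‖z i‖^2 ≤ r^2 := by nlinarith [hz i, norm_nonneg (z i)]
                exact mul_le_mul_of_nonneg_right h1 (sq_nonneg _)
      _ = r^2 * ∑ i, ‖x i‖^2 := by rw [Finset.mul_sum]
      _ = (r * ‖x‖)^2 := by rw [mul_pow, PiLp.norm_sq_eq_of_L2]
  have h2 : (0:ℝ) ≤ r * ‖x‖ := by positivity
  nlinarith [norm_nonneg (diagN z x : PiLp 2 K)]

end HelpersN

section MyBlock
variable {P Q P' Q' : Type*} [NormedAddCommGroup P] [InnerProductSpace ℂ P]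
  [NormedAddCommGroup Q] [InnerProductSpace ℂ Q]
  [NormedAddCommGroup P'] [InnerProductSpace ℂ P']
  [NormedAddCommGroup Q'] [InnerProductSpace ℂ Q']

@[simp] lemma rowB_apply' (B₁ : P →L[ℂ] ℂ) (B₂ : Q →L[ℂ] ℂ) (x : WithLp 2 (P × Q)) :
    rowB B₁ B₂ x = B₁ x.fst + B₂ x.snd := rfl
@[simp] lemma colC_fst' (C₁ : ℂ →L[ℂ] P) (C₂ : ℂ →L[ℂ] Q) (z : ℂ) :
    (colC C₁ C₂ z).fst = C₁ z := rfl
@[simp] lemma colC_snd' (C₁ : ℂ →L[ℂ] P) (C₂ : ℂ →L[ℂ] Q) (z : ℂ) :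
    (colC C₁ C₂ z).snd = C₂ z := rfl
@[simp] lemma blockD_fst' (D₁₁ : P →L[ℂ] P') (D₁₂ : Q →L[ℂ] P') (D₂₁ : P →L[ℂ] Q')
    (D₂₂ : Q →L[ℂ] Q') (x : WithLp 2 (P × Q)) :
    (blockD D₁₁ D₁₂ D₂₁ D₂₂ x).fst = D₁₁ x.fst + D₁₂ x.snd := rfl
@[simp] lemma blockD_snd' (D₁₁ : P →L[ℂ] P') (D₁₂ : Q →L[ℂ] P') (D₂₁ : P →L[ℂ] Q')
    (D₂₂ : Q →L[ℂ] Q') (x : WithLp 2 (P × Q)) :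
    (blockD D₁₁ D₁₂ D₂₁ D₂₂ x).snd = D₂₁ x.fst + D₂₂ x.snd := rfl

lemma blockD_diag_norm_le (E₁ : P →L[ℂ] P) (E₂ : Q →L[ℂ] Q) {r : ℝ} (hr : 0 ≤ r)
    (h₁ : ‖E₁‖ ≤ r) (h₂ : ‖E₂‖ ≤ r) : ‖blockD E₁ 0 0 E₂‖ ≤ r := by
  refine ContinuousLinearMap.opNorm_le_bound _ hr fun x => ?_
  have hE1 : ‖E₁ x.fst‖ ≤ r * ‖x.fst‖ :=
    (E₁.le_opNorm x.fst).trans (mul_le_mul_of_nonneg_right h₁ (norm_nonneg _))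
  have hE2 : ‖E₂ x.snd‖ ≤ r * ‖x.snd‖ :=
    (E₂.le_opNorm x.snd).trans (mul_le_mul_of_nonneg_right h₂ (norm_nonneg _))
  have h1 : ‖blockD E₁ 0 0 E₂ x‖ ^ 2 ≤ (r * ‖x‖) ^ 2 := by
    rw [WithLp.prod_norm_sq_eq_of_L2, blockD_fst', blockD_snd', mul_pow,
      WithLp.prod_norm_sq_eq_of_L2 x, mul_add]
    simp only [ContinuousLinearMap.zero_apply, add_zero, zero_add]
    have := norm_nonneg (E₁ x.fst); have := norm_nonneg (E₂ x.snd)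
    have := norm_nonneg x.fst; have := norm_nonneg x.snd
    nlinarith [mul_nonneg hr (norm_nonneg x.fst), mul_nonneg hr (norm_nonneg x.snd)]
  nlinarith [norm_nonneg (blockD E₁ 0 0 E₂ x), mul_nonneg hr (norm_nonneg x)]

end MyBlock
set_option maxHeartbeats 1000000
set_option synthInstance.maxHeartbeats 1000000

/-- Theorem 2.3 of the paper. If
`V = [[a, B₁, B₂],[C₁, D₁₁, (1/a)C₁B₂],[C₂, 0, D₂₂]]` is an isometric colligation on
`ℂ ⊕ ((H₁ ⊕ ⋯ ⊕ H_m) ⊕ (H_{m+1} ⊕ ⋯ ⊕ Hₙ))` with `a ≠ 0` (the first `m` spaces being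
`M 0, …, M (m-1)` and the last `n - m = k` spaces being `N 0, …, N (k-1)`, `1 ≤ m < n`), and
`α, β` are non-zero scalars with `|β|² = |a|² + ‖C₁‖²` and `α = a/β`, then
`Ṽ₁ = [[α, B₁],[(1/β)C₁, D₁₁]]` and `Ṽ₂ = [[β, (1/α)B₂],[C₂, D₂₂]]` are isometric
colligations and `τ_V(z) = τ_{Ṽ₁}(z₁,…,z_m) τ_{Ṽ₂}(z_{m+1},…,zₙ)` on the polydisc. -/
theorem isometric_colligation_split_factors
    {m k : ℕ} (hm : 1 ≤ m) (hk : 1 ≤ k)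
    {M : Fin m → Type*} {N : Fin k → Type*}
    [∀ i, NormedAddCommGroup (M i)] [∀ i, InnerProductSpace ℂ (M i)] [∀ i, CompleteSpace (M i)]
    [∀ i, NormedAddCommGroup (N i)] [∀ i, InnerProductSpace ℂ (N i)] [∀ i, CompleteSpace (N i)]
    (a α β : ℂ) (ha : a ≠ 0) (hα : α ≠ 0) (hβ : β ≠ 0)
    (B₁ : PiLp 2 M →L[ℂ] ℂ) (C₁ : ℂ →L[ℂ] PiLp 2 M) (D₁₁ : PiLp 2 M →L[ℂ] PiLp 2 M)
    (B₂ : PiLp 2 N →L[ℂ] ℂ) (C₂ : ℂ →L[ℂ] PiLp 2 N) (D₂₂ : PiLp 2 N →L[ℂ] PiLp 2 N)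
    (hV : IsIsometricColligation a (rowB B₁ B₂) (colC C₁ C₂)
      (blockD D₁₁ (a⁻¹ • (C₁ ∘L B₂)) 0 D₂₂))
    (hβ2 : ‖β‖ ^ 2 = ‖a‖ ^ 2 + ‖C₁ 1‖ ^ 2) (hαβ : α = a / β) :
    IsIsometricColligation α B₁ (β⁻¹ • C₁) D₁₁ ∧
      IsIsometricColligation β (α⁻¹ • B₂) C₂ D₂₂ ∧
      ∀ z₁ ∈ polyDisc m, ∀ z₂ ∈ polyDisc k,
        transferSplit (M := M) (N := N) a (rowB B₁ B₂) (colC C₁ C₂)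
            (blockD D₁₁ (a⁻¹ • (C₁ ∘L B₂)) 0 D₂₂) z₁ z₂ =
          transferN α B₁ (β⁻¹ • C₁) D₁₁ z₁ * transferN β (α⁻¹ • B₂) C₂ D₂₂ z₂ := by
  classical
  set c₁ : PiLp 2 M := C₁ 1 with hc₁
  set c₂ : PiLp 2 N := C₂ 1 with hc₂
  have hC₁z : ∀ z : ℂ, C₁ z = z • c₁ := fun z => by
    rw [hc₁, ← C₁.map_smul, smul_eq_mul, mul_one]
  have hC₂z : ∀ z : ℂ, C₂ z = z • c₂ := fun z => by
    rw [hc₂, ← C₂.map_smul, smul_eq_mul, mul_one]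
  -- scalar consequences of hV
  have hB : ∀ k₁ : PiLp 2 M,
      (starRingEnd ℂ) a * B₁ k₁ + (inner ℂ c₁ (D₁₁ k₁) : ℂ) = 0 := by
    intro k₁
    have := hV 1 0 0 ((WithLp.equiv 2 _).symm (k₁, 0))
    simpa [WithLp.prod_inner_apply, mul_comm] using this
  have hC : ∀ k₂ : PiLp 2 N,
      (starRingEnd ℂ) a * B₂ k₂ + (a⁻¹ * B₂ k₂ * (inner ℂ c₁ c₁ : ℂ)
        + (inner ℂ c₂ (D₂₂ k₂) : ℂ)) = 0 := by
    intro k₂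
    have h0 := hV 1 0 0 ((WithLp.equiv 2 _).symm (0, k₂))
    simp only [rowB_apply', colC_fst', colC_snd', blockD_fst', blockD_snd',
      WithLp.prod_inner_apply, WithLp.equiv_symm_apply, WithLp.toLp_fst, WithLp.toLp_snd, WithLp.ofLp_fst, WithLp.ofLp_snd,
      map_zero, mul_zero, mul_one, zero_add, add_zero, inner_zero_left, inner_zero_right,
      ContinuousLinearMap.zero_apply, ContinuousLinearMap.smul_apply,
      ContinuousLinearMap.comp_apply, hC₁z, inner_smul_right, smul_eq_mul, one_smul, ← hc₁, ← hc₂] at h0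
    linear_combination h0
  have hD3 : ∀ h₁ k₁ : PiLp 2 M,
      (starRingEnd ℂ) (B₁ h₁) * B₁ k₁ + (inner ℂ (D₁₁ h₁) (D₁₁ k₁) : ℂ) = inner ℂ h₁ k₁ := by
    intro h₁ k₁
    have := hV 0 0 ((WithLp.equiv 2 _).symm (h₁, 0)) ((WithLp.equiv 2 _).symm (k₁, 0))
    simpa [WithLp.prod_inner_apply] using this
  have hE3 : ∀ h₂ k₂ : PiLp 2 N,
      (starRingEnd ℂ) (B₂ h₂) * B₂ k₂
        + (((starRingEnd ℂ) a)⁻¹ * a⁻¹ * ((starRingEnd ℂ) (B₂ h₂) * B₂ k₂) * (inner ℂ c₁ c₁ : ℂ)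
          + (inner ℂ (D₂₂ h₂) (D₂₂ k₂) : ℂ)) = inner ℂ h₂ k₂ := by
    intro h₂ k₂
    have h0 := hV 0 0 ((WithLp.equiv 2 _).symm (0, h₂)) ((WithLp.equiv 2 _).symm (0, k₂))
    simp only [rowB_apply', colC_fst', colC_snd', blockD_fst', blockD_snd',
      WithLp.prod_inner_apply, WithLp.equiv_symm_apply, WithLp.toLp_fst, WithLp.toLp_snd, WithLp.ofLp_fst, WithLp.ofLp_snd,
      map_zero, mul_zero, mul_one, zero_add, add_zero, inner_zero_left, inner_zero_right,
      ContinuousLinearMap.zero_apply, ContinuousLinearMap.smul_apply,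
      ContinuousLinearMap.comp_apply, hC₁z, inner_smul_right, inner_smul_left,
      smul_eq_mul, map_mul, map_inv₀, one_smul, ← hc₁, ← hc₂] at h0
    linear_combination h0
  have hA : (starRingEnd ℂ) a * a + ((inner ℂ c₁ c₁ : ℂ) + (inner ℂ c₂ c₂ : ℂ)) = 1 := by
    have := hV 1 1 0 0
    rw [WithLp.prod_inner_apply] at this
    simpa [WithLp.prod_inner_apply, mul_comm] using this
  have e1 : (starRingEnd ℂ) β * β = (starRingEnd ℂ) a * a + (inner ℂ c₁ c₁ : ℂ) := by
    rw [RCLike.conj_mul, RCLike.conj_mul, inner_self_eq_norm_sq_to_K]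
    exact_mod_cast congrArg (fun r : ℝ => (r : ℂ)) hβ2
  have hβc : (starRingEnd ℂ) β ≠ 0 := by simpa using hβ
  have hac : (starRingEnd ℂ) a ≠ 0 := by simpa using ha
  subst hαβ
  have part1 : IsIsometricColligation (a / β) B₁ (β⁻¹ • C₁) D₁₁ := by
    intro z w h k
    have e2 := hB k
    have e3 : a * (starRingEnd ℂ) (B₁ h) + (inner ℂ (D₁₁ h) c₁ : ℂ) = 0 := by
      have := congrArg (starRingEnd ℂ) (hB h)
      simpa [inner_conj_symm, mul_comm] using this
    have e4 := hD3 h k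
    simp only [ContinuousLinearMap.smul_apply, hC₁z, inner_add_left, inner_add_right,
      inner_smul_left, inner_smul_right, smul_smul, map_add, map_mul, map_div₀, map_inv₀]
    have e1' : ((starRingEnd ℂ) β)⁻¹ * β⁻¹ * ((starRingEnd ℂ) a * a + (inner ℂ c₁ c₁ : ℂ)) = 1 := by
      rw [← e1]; field_simp
    linear_combination (starRingEnd ℂ) z * w * e1'
      + ((starRingEnd ℂ) β)⁻¹ * (starRingEnd ℂ) z * e2 + β⁻¹ * w * e3 + e4
  have part2 : IsIsometricColligation β ((a / β)⁻¹ • B₂) C₂ D₂₂ := by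
    intro z w h k
    have f1 : (starRingEnd ℂ) β * β + (inner ℂ c₂ c₂ : ℂ) = 1 := by
      linear_combination hA + e1
    have f2 := hC k
    have f3 : a * (starRingEnd ℂ) (B₂ h) + ((starRingEnd ℂ) a)⁻¹ * (starRingEnd ℂ) (B₂ h)
        * (inner ℂ c₁ c₁ : ℂ) + (inner ℂ (D₂₂ h) c₂ : ℂ) = 0 := by
      have := congrArg (starRingEnd ℂ) (hC h)
      simp only [map_add, map_mul, map_inv₀, map_zero, inner_conj_symm,
        Complex.conj_conj, RCLike.conj_conj] at this
      linear_combination this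
    have f4 := hE3 h k
    simp only [ContinuousLinearMap.smul_apply, hC₂z, inner_add_left, inner_add_right,
      inner_smul_left, inner_smul_right, smul_smul, smul_eq_mul, map_add, map_mul,
      map_div₀, map_inv₀, inv_div]
    have e1a : a⁻¹ * ((starRingEnd ℂ) β * β) = (starRingEnd ℂ) a + a⁻¹ * (inner ℂ c₁ c₁ : ℂ) := by
      rw [e1]; field_simp
    have e1b : ((starRingEnd ℂ) a)⁻¹ * ((starRingEnd ℂ) β * β) = a + ((starRingEnd ℂ) a)⁻¹ * (inner ℂ c₁ c₁ : ℂ) := by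
      rw [e1]; field_simp; try ring
    have e1c : ((starRingEnd ℂ) a)⁻¹ * a⁻¹ * ((starRingEnd ℂ) β * β)
        = 1 + ((starRingEnd ℂ) a)⁻¹ * a⁻¹ * (inner ℂ c₁ c₁ : ℂ) := by
      rw [e1]; field_simp; try ring
    linear_combination ((starRingEnd ℂ) z * w) * f1 + (starRingEnd ℂ) z * f2 + w * f3 + f4
      + ((starRingEnd ℂ) z * B₂ k) * e1a + (w * (starRingEnd ℂ) (B₂ h)) * e1b
      + ((starRingEnd ℂ) (B₂ h) * B₂ k) * e1c
  refine ⟨part1, part2, ?_⟩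
  -- transfer functions
  intro z₁ hz₁ z₂ hz₂
  haveI : CompleteSpace (PiLp 2 M) := inferInstance
  haveI : CompleteSpace (PiLp 2 N) := inferInstance
  haveI : Nonempty (Fin m) := ⟨⟨0, hm⟩⟩
  haveI : Nonempty (Fin k) := ⟨⟨0, hk⟩⟩
  set E₁ : PiLp 2 M →L[ℂ] PiLp 2 M := diagN z₁ with hE₁def
  set E₂ : PiLp 2 N →L[ℂ] PiLp 2 N := diagN z₂ with hE₂def
  set Db : WithLp 2 (PiLp 2 M × PiLp 2 N) →L[ℂ] WithLp 2 (PiLp 2 M × PiLp 2 N) :=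
    blockD D₁₁ (a⁻¹ • C₁.comp B₂) 0 D₂₂ with hDbdef
  set r : ℝ := max (Finset.univ.sup' Finset.univ_nonempty fun i => ‖z₁ i‖)
    (Finset.univ.sup' Finset.univ_nonempty fun i => ‖z₂ i‖) with hrdef
  have hz₁r : ∀ i, ‖z₁ i‖ ≤ r := fun i =>
    le_trans (Finset.le_sup' (fun j => ‖z₁ j‖) (Finset.mem_univ i)) (le_max_left _ _)
  have hz₂r : ∀ i, ‖z₂ i‖ ≤ r := fun i =>
    le_trans (Finset.le_sup' (fun j => ‖z₂ j‖) (Finset.mem_univ i)) (le_max_right _ _)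
  have hr0 : 0 ≤ r := le_trans (norm_nonneg (z₁ ⟨0, hm⟩)) (hz₁r _)
  have hr1 : r < 1 := by
    apply max_lt <;> exact (Finset.sup'_lt_iff _).mpr fun i _ => by
      first | exact hz₁ i | exact hz₂ i
  have hnE₁ : ‖E₁‖ ≤ r := diagN_norm_le hr0 hz₁r
  have hnE₂ : ‖E₂‖ ≤ r := diagN_norm_le hr0 hz₂r
  have hnEb : ‖blockD E₁ 0 0 E₂‖ ≤ r := blockD_diag_norm_le E₁ E₂ hr0 hnE₁ hnE₂
  have hnD₁₁ : ‖D₁₁‖ ≤ 1 := by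
    refine ContinuousLinearMap.opNorm_le_bound _ zero_le_one fun h => ?_
    rw [one_mul]
    exact norm_le_of_ident (B₁ h) 0 c₁ (D₁₁ h) h (by
      simpa using hD3 h h)
  have hnD₂₂ : ‖D₂₂‖ ≤ 1 := by
    refine ContinuousLinearMap.opNorm_le_bound _ zero_le_one fun h => ?_
    rw [one_mul]
    refine norm_le_of_ident (B₂ h) (a⁻¹ * B₂ h) c₁ (D₂₂ h) h ?_
    simp only [map_mul, map_inv₀]
    linear_combination hE3 h h
  have hnDb : ‖Db‖ ≤ 1 := by
    refine ContinuousLinearMap.opNorm_le_bound _ zero_le_one fun x => ?_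
    rw [one_mul]
    refine norm_le_of_ident (rowB B₁ B₂ x) 0 c₁ (Db x) x ?_
    have := hV 0 0 x x
    simp only [mul_zero, zero_add, map_zero, add_zero, zero_mul] at this
    simpa using this
  have h1lt : ‖E₁.comp D₁₁‖ < 1 :=
    lt_of_le_of_lt (le_trans (ContinuousLinearMap.opNorm_comp_le _ _)
      (by nlinarith [ContinuousLinearMap.opNorm_nonneg E₁])) hr1
  have h2lt : ‖E₂.comp D₂₂‖ < 1 :=
    lt_of_le_of_lt (le_trans (ContinuousLinearMap.opNorm_comp_le _ _)
      (by nlinarith [ContinuousLinearMap.opNorm_nonneg E₂])) hr1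
  have hblt : ‖(blockD E₁ 0 0 E₂).comp Db‖ < 1 :=
    lt_of_le_of_lt (le_trans (ContinuousLinearMap.opNorm_comp_le _ _)
      (by nlinarith [ContinuousLinearMap.opNorm_nonneg (blockD E₁ 0 0 E₂)])) hr1
  -- the inverses
  set u' : PiLp 2 M := Ring.inverse (1 - E₁.comp D₁₁) (E₁ c₁) with hu'def
  set x₂ : PiLp 2 N := Ring.inverse (1 - E₂.comp D₂₂) (E₂ c₂) with hx₂def
  have hu' : u' - E₁ (D₁₁ u') = E₁ c₁ := by
    have := ring_inverse_spec (E₁.comp D₁₁) h1lt (E₁ c₁)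
    simpa using this
  have hx₂ : x₂ - E₂ (D₂₂ x₂) = E₂ c₂ := by
    have := ring_inverse_spec (E₂.comp D₂₂) h2lt (E₂ c₂)
    simpa using this
  set v : ℂ := B₂ x₂ with hvdef
  set u : ℂ := B₁ u' with hudef
  set x₁ : PiLp 2 M := (1 + a⁻¹ * v) • u' with hx₁def
  set X : WithLp 2 (PiLp 2 M × PiLp 2 N) := (WithLp.equiv 2 _).symm (x₁, x₂) with hXdef
  have hinv : Ring.inverse (1 - (blockD E₁ 0 0 E₂).comp Db)
      (blockD E₁ 0 0 E₂ (colC C₁ C₂ 1)) = X := by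
    refine ring_inverse_apply _ hblt _ _ ?_
    refine withlp_prod_ext _ _ ?_ ?_
    · show x₁ - (E₁ ((Db X).fst) + (0 : _ →L[ℂ] _) ((Db X).snd)) = E₁ (C₁ 1) + (0 : _ →L[ℂ] _) (C₂ 1)
      simp only [ContinuousLinearMap.zero_apply, add_zero]
      have hDbX : (Db X).fst = D₁₁ x₁ + (a⁻¹ * v) • c₁ := by
        show D₁₁ X.fst + (a⁻¹ • C₁.comp B₂) X.snd = _
        simp only [hXdef, WithLp.equiv_symm_apply, WithLp.toLp_fst, WithLp.toLp_snd,
          ContinuousLinearMap.smul_apply, ContinuousLinearMap.comp_apply, hC₁z, ← hvdef,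
          smul_smul, smul_eq_mul]
      rw [hDbX, map_add, map_smul, ← hc₁, hx₁def, map_smul, map_smul, ← hu']
      module
    · show x₂ - ((0 : _ →L[ℂ] _) ((Db X).fst) + E₂ ((Db X).snd)) = (0 : _ →L[ℂ] _) (C₁ 1) + E₂ (C₂ 1)
      simp only [ContinuousLinearMap.zero_apply, add_zero, zero_add]
      have hDbX : (Db X).snd = D₂₂ x₂ := by
        show (0 : _ →L[ℂ] _) X.fst + D₂₂ X.snd = _
        simp [hXdef]
      rw [hDbX, ← hc₂, hx₂]
  have hsplit : transferSplit (M := M) (N := N) a (rowB B₁ B₂) (colC C₁ C₂) Db z₁ z₂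
      = a + ((1 + a⁻¹ * v) * u + v) := by
    rw [transferSplit, ← hE₁def, ← hE₂def, hinv]
    simp only [rowB_apply', hXdef, WithLp.equiv_symm_apply, WithLp.toLp_fst, WithLp.toLp_snd, hx₁def,
      map_smul, smul_eq_mul, ← hudef, ← hvdef, add_assoc]
  have ht1 : transferN (a / β) B₁ (β⁻¹ • C₁) D₁₁ z₁ = a / β + β⁻¹ * u := by
    rw [transferN, ← hE₁def]
    have : E₁ ((β⁻¹ • C₁) 1) = β⁻¹ • E₁ c₁ := by
      simp [hC₁z, map_smul]
    rw [this, map_smul, map_smul, ← hu'def, smul_eq_mul]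
  have ht2 : transferN β ((a / β)⁻¹ • B₂) C₂ D₂₂ z₂ = β + (a / β)⁻¹ * v := by
    rw [transferN, ← hE₂def, ← hc₂, ← hx₂def]
    simp [hvdef]
  rw [hsplit, ht1, ht2]
  field_simp
  ring
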